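/- arXiv:1401.2808 — 4 statements merged into one kernel-verified Lean document; each statement's English description precedes it below -/
import Mathlib

section
/- For all integers m ≥ 1 and all sufficiently large k, S_m(k) > α^k where α = sqrt(2^m/(2^m - 1)). That is, there exists a 2-coloring of {1, 2, ..., ⌈α^k⌉} with no monochromatic k-term semi-progression of scope m. -/
open scoped Classical

/-- `x` is a `k`-term semi-progression of scope `m`. -/
def IsSemiProg (m k : ℕ) (x : ℕ → ℕ) : Prop :=
  ∃ d : ℕ, 1 ≤ d ∧ ∀ j, j + 1 < k → ∃ i, 1 ≤ i ∧ i ≤ m ∧ x (j + 1) = x j + i * d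

/-- A 2-coloring of `{1,...,N}`, encoded by the set `A` of elements of the first color,
contains a monochromatic `k`-term semi-progression of scope `m`. -/
def HasMonoSP (N k m : ℕ) (A : Finset ℕ) : Prop :=
  ∃ x : ℕ → ℕ, (∀ j < k, x j ∈ Finset.Icc 1 N) ∧
    ((∀ j < k, x j ∈ A) ∨ (∀ j < k, x j ∉ A)) ∧ IsSemiProg m k x

/-- `f(N,k,m)`: the number of 2-colorings of `{1,...,N}` containing a monochromatic
`k`-term semi-progression of scope `m`. -/
noncomputable def f (N k m : ℕ) : ℕ :=
  ((Finset.Icc 1 N).powerset.filter (HasMonoSP N k m)).card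

/-- `S_m(k)`: least `N` such that every 2-coloring of `{1,...,N}` yields a monochromatic
`k`-term semi-progression of scope `m`. -/
noncomputable def S (m k : ℕ) : ℕ :=
  sInf {N | ∀ A ∈ (Finset.Icc 1 N).powerset, HasMonoSP N k m A}

/-!
Union bound. Let a colouring of `{1, …, N}` contain a monochromatic `k`-term semi-progression
of scope `m` with difference `d`, first term `x₀` and colour `b`. Re-choosing its terms greedily as
the successive points of colour `b` along `x₀ + d ℕ` gives one whose gaps `g₁, …, g_{k-1} ∈ [1, m]`
fix the colouring on the whole window `x₀ + d·[0, ∑ gᵢ]`: colour `b` at the terms, the other colour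
between them. Hence at most `2 ^ (N - 1 - ∑ gᵢ)` colourings realise a given `(b, d, x₀, g)`, and
summing over `g ∈ [1, m]^(k-1)`, `d ≤ (N - 1)/(k - 1)`, `x₀ ≤ N`, `b` bounds the number of bad
colourings by `(N - 1)/(k - 1) · N · (1 - 2^{-m})^(k-1) · 2^N`. Since `α² (1 - 2^{-m}) = 1`, this is
below `2^N` for `N = ⌈α^k⌉` once `k ≥ 10`.

`S m k` is an `sInf`, which is `0` for an empty set; van der Waerden's theorem, made finite by
compactness, shows the set is nonempty, so a good colouring of `{1, …, N}` forces `N < S m k`.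
-/

open Finset

theorem exists_mono_arithProg_Icc {κ : Type*} [Finite κ] (k : ℕ) :
    ∃ N, ∀ C : ℕ → κ, ∃ a > 0, ∃ b c, ∀ j < k, b + a * j ∈ Icc 1 N ∧ C (b + a * j) = c := by
  by_contra! h
  choose C hC using h
  obtain ⟨χ, hχ⟩ := Finset.rado_selection fun s : Finset ℕ => C (s.sup id)
  obtain ⟨a, ha, b, c, hc⟩ :=
    Combinatorics.exists_mono_homothetic_copy (range k) fun n => χ (n + 1)
  obtain ⟨t, hst, hχt⟩ := hχ ((range k).image fun j => b + 1 + a * j)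
  obtain ⟨j, hj, hne⟩ := hC (t.sup id) a ha (b + 1) c
  have hjt : b + 1 + a * j ∈ t := hst (mem_image_of_mem _ (mem_range.2 hj))
  refine hne (mem_Icc.2 ⟨by omega, le_sup (f := id) hjt⟩) ?_
  rw [← hχt _ (mem_image_of_mem _ (mem_range.2 hj)), ← hc j (mem_range.2 hj), smul_eq_mul]
  ring_nf

lemma card_le_two_pow_of_forall_mem_iff {ι α : Type*} [DecidableEq α] {s : Finset α}
    {U : Finset ι} {e : ι → α} (he : Set.InjOn e U) (hU : U.image e ⊆ s) (P : ι → Prop)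
    {F : Finset (Finset α)} (hF : ∀ A ∈ F, A ⊆ s ∧ ∀ u ∈ U, e u ∈ A ↔ P u) :
    #F ≤ 2 ^ (#s - #U) := by
  rw [← card_image_of_injOn he, ← card_sdiff_of_subset hU, ← card_powerset]
  refine card_le_card_of_injOn (· \ U.image e) (fun A hA => ?_) (fun A hA B hB hAB => ?_)
  · exact mem_powerset.2 (sdiff_subset_sdiff (hF A hA).1 le_rfl)
  · have hinter : A ∩ U.image e = B ∩ U.image e := by
      ext y
      simp only [mem_inter, mem_image]
      constructor <;> rintro ⟨hy, u, hu, rfl⟩ <;> refine ⟨?_, u, hu, rfl⟩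
      · exact ((hF B hB).2 u hu).2 (((hF A hA).2 u hu).1 hy)
      · exact ((hF A hA).2 u hu).2 (((hF B hB).2 u hu).1 hy)
    rw [← sdiff_union_inter A (U.image e), ← sdiff_union_inter B (U.image e), hinter]
    exact congrArg (· ∪ _) hAB

def IsGapChain (m n : ℕ) (s : ℕ → ℕ) : Prop :=
  s 0 = 0 ∧ ∀ j < n, s j < s (j + 1) ∧ s (j + 1) ≤ s j + m

section GapChain

variable {Q : Set ℕ} {s : ℕ → ℕ} {m n : ℕ}

lemma IsGapChain.exists_mem_Ioc (hs : IsGapChain m n s) (hQ : ∀ j ≤ n, s j ∈ Q) {a : ℕ}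
    (ha : a < s n) : ∃ u ∈ Q, a < u ∧ u ≤ a + m := by
  induction n with
  | zero => simp [hs.1] at ha
  | succ n ih =>
    by_cases han : a < s n
    · exact ih ⟨hs.1, fun j hj => hs.2 j (by omega)⟩ (fun j hj => hQ j (by omega)) han
    · exact ⟨s (n + 1), hQ _ le_rfl, ha, by linarith [(hs.2 n n.lt_succ_self).2]⟩

open Nat in
lemma IsGapChain.exists_tight (hs : IsGapChain m n s) (hQ : ∀ j ≤ n, s j ∈ Q) :
    ∃ y : ℕ → ℕ, IsGapChain m n y ∧ (∀ j ≤ n, y j ∈ Q) ∧ y n ≤ s n ∧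
      ∀ u ∈ Q, u ≤ y n → ∃ j ≤ n, y j = u := by
  -- padding `Q` above `s n` makes it infinite, so that `nth p` enumerates it unconditionally
  set p : ℕ → Prop := fun u => u ∈ Q ∨ s n < u
  have hinf : (Set.ofPred p).Infinite :=
    Set.infinite_of_forall_exists_gt fun a => ⟨max a (s n) + 1, .inr (by omega), by omega⟩
  have hp0 : nth p 0 = 0 := nth_zero_of_zero (.inl (hs.1 ▸ hQ 0 (zero_le n)))
  have hle : ∀ j ≤ n, nth p j ≤ s j := by
    intro j hj
    induction j with
    | zero => rw [hp0]; exact zero_le _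
    | succ j ih =>
      by_contra! hlt
      have := le_nth_of_lt_nth_succ hlt (.inl (hQ _ hj))
      linarith [ih (by omega), (hs.2 j (by omega)).1]
  have hmemQ : ∀ j ≤ n, nth p j ∈ Q := fun j hj =>
    (nth_mem_of_infinite hinf j).resolve_right
      (not_lt.2 (((nth_le_nth hinf).2 hj).trans (hle n le_rfl)))
  refine ⟨nth p, ⟨hp0, fun j hj => ⟨nth_strictMono hinf j.lt_succ_self, ?_⟩⟩, hmemQ,
    hle n le_rfl, fun u hu hun => ⟨count p u, ?_, nth_count (.inl hu)⟩⟩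
  · obtain ⟨u, huQ, hju, hum⟩ :=
      hs.exists_mem_Ioc hQ (((nth_lt_nth hinf).2 hj).trans_le (hle n le_rfl))
    by_contra! h
    linarith [le_nth_of_lt_nth_succ (lt_of_le_of_lt hum h) (.inl huQ)]
  · rwa [← nth_le_nth hinf, nth_count (.inl hu)]

end GapChain

lemma IsSemiProg.exists_gapChain {m n : ℕ} {x : ℕ → ℕ} (h : IsSemiProg m (n + 1) x) :
    ∃ d ≥ 1, ∃ s, IsGapChain m n s ∧ ∀ j ≤ n, x j = x 0 + d * s j := by
  obtain ⟨d, hd, hstep⟩ := h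
  have hstep' : ∀ j, ∃ i, j < n → 1 ≤ i ∧ i ≤ m ∧ x (j + 1) = x j + i * d := fun j => by
    by_cases hj : j < n
    · obtain ⟨i, hi⟩ := hstep j (by omega)
      exact ⟨i, fun _ => hi⟩
    · exact ⟨0, fun h => absurd h hj⟩
  choose i hi using hstep'
  refine ⟨d, hd, fun j => ∑ t ∈ range j, i t, ⟨by simp, fun j hj => ?_⟩, fun j hj => ?_⟩
  · have := hi j hj
    simp only [sum_range_succ]
    omega
  · induction j with
    | zero => simp
    | succ j ih =>
      dsimp only at ih ⊢
      rw [(hi j hj).2.2, ih (by omega), sum_range_succ]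
      ring

lemma Fin.partialSum_last {M : Type*} [AddCommMonoid M] {n : ℕ} (f : Fin n → M) :
    Fin.partialSum f (Fin.last n) = ∑ i, f i := by
  simp [Fin.partialSum, List.take_of_length_le, List.sum_ofFn]

lemma Fin.partialSum_sub_eq {n : ℕ} {y : ℕ → ℕ} (h0 : y 0 = 0) (hy : ∀ j < n, y j ≤ y (j + 1))
    (i : Fin (n + 1)) : Fin.partialSum (fun j : Fin n => y (j + 1) - y j) i = y i := by
  induction i using Fin.induction with
  | zero => simp [h0]
  | succ j ih =>
    rw [Fin.partialSum_succ, ih]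
    have := hy j j.isLt
    simp only [Fin.val_castSucc, Fin.val_succ]
    omega

/-- On the window `x₀ + d·[0, ∑ g]`, the colouring `A` has colour `b` (`b = true` meaning "in `A`")
exactly at the partial sums `x₀ + d·(g 0 + ⋯ + g (j-1))`. -/
def HasGapPattern (N : ℕ) (A : Finset ℕ) (b : Bool) (d x₀ : ℕ) {n : ℕ} (g : Fin n → ℕ) : Prop :=
  x₀ + d * ∑ j, g j ≤ N ∧
    ∀ u ≤ ∑ j, g j, (x₀ + d * u ∈ A ↔ (u ∈ Set.range (Fin.partialSum g) ↔ b = true))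

lemma HasMonoSP.exists_hasGapPattern {N n m : ℕ} {A : Finset ℕ} (hn : 0 < n)
    (h : HasMonoSP N (n + 1) m A) :
    ∃ b, ∃ d ∈ Icc 1 ((N - 1) / n), ∃ x₀ ∈ Icc 1 N,
      ∃ g ∈ Fintype.piFinset fun _ : Fin n => Icc 1 m, HasGapPattern N A b d x₀ g := by
  obtain ⟨x, hx, hcol, hsp⟩ := h
  obtain ⟨d, hd, s, hs, hxs⟩ := hsp.exists_gapChain
  set b := decide (x 0 ∈ A)
  have hsQ : ∀ j ≤ n, s j ∈ {u | x 0 + d * u ∈ A ↔ b = true} := by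
    intro j hj
    simp only [Set.mem_ofPred_eq, b, decide_eq_true_eq, ← hxs j hj]
    rcases hcol with h | h <;> simp [h j (by omega), h 0 (by omega)]
  obtain ⟨y, ⟨hy0, hygap⟩, hyQ, hys, hycomplete⟩ := hs.exists_tight hsQ
  set g : Fin n → ℕ := fun j => y (j + 1) - y j
  have hpsum : ∀ i, Fin.partialSum g i = y i :=
    Fin.partialSum_sub_eq hy0 fun j hj => (hygap j hj).1.le
  have hg : ∀ j, g j ∈ Icc 1 m := fun j => by
    have := hygap j j.isLt
    simp only [mem_Icc, g]
    omega
  have hT : ∑ j, g j = y n := by rw [← Fin.partialSum_last, hpsum]; simp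
  have hnT : n ≤ ∑ j, g j := by
    calc n = ∑ _j : Fin n, 1 := by simp
      _ ≤ ∑ j, g j := sum_le_sum fun j _ => (mem_Icc.1 (hg j)).1
  have hx0 := mem_Icc.1 (hx 0 (by omega))
  have hxn := mem_Icc.1 (hx n (by omega))
  rw [hxs n le_rfl] at hxn
  have hdT : d * ∑ j, g j ≤ d * s n := Nat.mul_le_mul_left d (hT ▸ hys)
  refine ⟨b, d, mem_Icc.2 ⟨hd, (Nat.le_div_iff_mul_le hn).2 ?_⟩, x 0, mem_Icc.2 hx0, g,
    Fintype.mem_piFinset.2 hg, by omega, fun u hu => ?_⟩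
  · have := Nat.mul_le_mul_left d hnT
    omega
  have hrange : u ∈ Set.range (Fin.partialSum g) ↔ (x 0 + d * u ∈ A ↔ b = true) := by
    constructor
    · rintro ⟨i, rfl⟩
      rw [hpsum]
      exact hyQ i (by omega)
    · intro huQ
      obtain ⟨j, hj, rfl⟩ := hycomplete u huQ (hT ▸ hu)
      exact ⟨⟨j, by omega⟩, hpsum _⟩
  rw [hrange]
  tauto

lemma card_hasGapPattern_mul_le (N : ℕ) (b : Bool) {d x₀ : ℕ} {n : ℕ} (g : Fin n → ℕ)
    (hd : 1 ≤ d) (hx₀ : 1 ≤ x₀) :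
    #{A ∈ (Icc 1 N).powerset | HasGapPattern N A b d x₀ g} * 2 ^ (∑ j, g j + 1) ≤ 2 ^ N := by
  set T := ∑ j, g j
  by_cases hfit : x₀ + d * T ≤ N
  swap
  · simp [HasGapPattern, T, hfit]
  have hinj : Set.InjOn (fun u => x₀ + d * u) (range (T + 1)) := fun a _ c _ h =>
    Nat.eq_of_mul_eq_mul_left hd (Nat.add_left_cancel h)
  have hsub : (range (T + 1)).image (fun u => x₀ + d * u) ⊆ Icc 1 N := by
    intro y hy
    obtain ⟨u, hu, rfl⟩ := mem_image.1 hy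
    have := Nat.mul_le_mul_left d (Nat.lt_succ_iff.1 (mem_range.1 hu))
    exact mem_Icc.2 ⟨by omega, by omega⟩
  have hTN : T + 1 ≤ N := by
    have := Nat.le_mul_of_pos_left T hd
    omega
  calc #{A ∈ (Icc 1 N).powerset | HasGapPattern N A b d x₀ g} * 2 ^ (T + 1)
      ≤ 2 ^ (N - (T + 1)) * 2 ^ (T + 1) := by
        gcongr
        calc _ ≤ 2 ^ (#(Icc 1 N) - #(range (T + 1))) :=
              card_le_two_pow_of_forall_mem_iff hinj hsub _ fun A hA =>
                ⟨mem_powerset.1 (mem_filter.1 hA).1, fun u hu =>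
                  (mem_filter.1 hA).2.2 u (Nat.lt_succ_iff.1 (mem_range.1 hu))⟩
          _ = 2 ^ (N - (T + 1)) := by simp
    _ = 2 ^ N := by rw [← pow_add, Nat.sub_add_cancel hTN]

lemma sum_Icc_one_half_pow (m : ℕ) : ∑ i ∈ Icc 1 m, (1 / 2 : ℝ) ^ i = 1 - (1 / 2) ^ m := by
  induction m with
  | zero => simp
  | succ m ih => rw [sum_Icc_succ_top (by omega), ih]; ring

lemma sum_piFinset_one_half_pow_sum (m n : ℕ) :
    ∑ g ∈ Fintype.piFinset (fun _ : Fin n => Icc 1 m), (1 / 2 : ℝ) ^ (∑ j, g j) =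
      (1 - (1 / 2) ^ m) ^ n := by
  simp_rw [← prod_pow_eq_pow_sum, ← prod_univ_sum, sum_Icc_one_half_pow, prod_const, card_univ,
    Fintype.card_fin]

lemma f_succ_le {N n m : ℕ} (hn : 0 < n) :
    (f N (n + 1) m : ℝ) ≤ ((N - 1) / n : ℕ) * N * (1 - (1 / 2) ^ m) ^ n * 2 ^ N := by
  set I := (univ : Finset Bool) ×ˢ Icc 1 ((N - 1) / n) ×ˢ Icc 1 N ×ˢ
    Fintype.piFinset fun _ : Fin n => Icc 1 m
  set F : Bool × ℕ × ℕ × (Fin n → ℕ) → Finset (Finset ℕ) := fun p =>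
    {A ∈ (Icc 1 N).powerset | HasGapPattern N A p.1 p.2.1 p.2.2.1 p.2.2.2}
  have hcover : f N (n + 1) m ≤ ∑ p ∈ I, #(F p) := by
    refine (card_le_card fun A hA => ?_).trans card_biUnion_le
    obtain ⟨hApow, hA⟩ := mem_filter.1 hA
    obtain ⟨b, d, hd, x₀, hx₀, g, hg, hpat⟩ := hA.exists_hasGapPattern hn
    exact mem_biUnion.2 ⟨(b, d, x₀, g), by simp [I, hd, hx₀, hg], mem_filter.2 ⟨hApow, hpat⟩⟩
  have hterm : ∀ p ∈ I, (#(F p) : ℝ) ≤ 2 ^ N * ((1 / 2) * (1 / 2) ^ ∑ j, p.2.2.2 j) := by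
    rintro ⟨b, d, x₀, g⟩ hp
    simp only [I, mem_product, mem_Icc] at hp
    have := card_hasGapPattern_mul_le N b g hp.2.1.1 hp.2.2.1.1
    rw [← pow_succ', one_div, inv_pow, ← div_eq_mul_inv, le_div_iff₀ (by positivity)]
    exact_mod_cast this
  calc (f N (n + 1) m : ℝ) ≤ ∑ p ∈ I, (#(F p) : ℝ) := by exact_mod_cast hcover
    _ ≤ ∑ p ∈ I, 2 ^ N * ((1 / 2) * (1 / 2) ^ ∑ j, p.2.2.2 j) := sum_le_sum hterm
    _ = ((N - 1) / n : ℕ) * N * (1 - (1 / 2) ^ m) ^ n * 2 ^ N := by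
      simp only [I, sum_product, ← mul_sum, sum_piFinset_one_half_pow_sum, sum_const,
        card_univ, Fintype.card_bool, Nat.card_Icc, nsmul_eq_mul]
      push_cast
      ring

lemma exists_not_hasMonoSP_of_f_lt {N k m : ℕ} (h : f N k m < 2 ^ N) :
    ∃ A ∈ (Icc 1 N).powerset, ¬ HasMonoSP N k m A := by
  obtain ⟨A, hA, hnot⟩ := exists_mem_notMem_of_card_lt_card
    (s := {A ∈ (Icc 1 N).powerset | HasMonoSP N k m A}) (t := (Icc 1 N).powerset)
    (by rwa [card_powerset, Nat.card_Icc, Nat.add_sub_cancel])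
  exact ⟨A, hA, fun h => hnot (mem_filter.2 ⟨hA, h⟩)⟩

lemma HasMonoSP.mono {N N' k m : ℕ} {A : Finset ℕ} (hN : N' ≤ N)
    (h : HasMonoSP N' k m (A ∩ Icc 1 N')) : HasMonoSP N k m A := by
  obtain ⟨x, hx, hcol, hsp⟩ := h
  have hxN : ∀ j < k, x j ∈ Icc 1 N := fun j hj => Icc_subset_Icc le_rfl hN (hx j hj)
  refine ⟨x, hxN, ?_, hsp⟩
  rcases hcol with hin | hout
  · exact .inl fun j hj => (mem_inter.1 (hin j hj)).1
  · exact .inr fun j hj hA => hout j hj (mem_inter.2 ⟨hA, hx j hj⟩)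

lemma nonempty_setOf_forall_hasMonoSP {m : ℕ} (hm : 1 ≤ m) (k : ℕ) :
    {N | ∀ A ∈ (Icc 1 N).powerset, HasMonoSP N k m A}.Nonempty := by
  obtain ⟨N, hN⟩ := exists_mono_arithProg_Icc (κ := Bool) k
  refine ⟨N, fun A _ => ?_⟩
  obtain ⟨a, ha, b, c, hc⟩ := hN fun n => decide (n ∈ A)
  refine ⟨fun j => b + a * j, fun j hj => (hc j hj).1, ?_, a, ha,
    fun j _ => ⟨1, le_rfl, hm, by ring⟩⟩
  cases c
  · exact .inr fun j hj => by simpa using (hc j hj).2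
  · exact .inl fun j hj => by simpa using (hc j hj).2

lemma lt_S_of_not_hasMonoSP {N k m : ℕ} {A : Finset ℕ} (hm : 1 ≤ m) (h : ¬ HasMonoSP N k m A) :
    N < S m k := by
  by_contra! hSN
  have hS := Nat.sInf_mem (nonempty_setOf_forall_hasMonoSP hm k)
  exact h ((hS _ (mem_powerset.2 inter_subset_right)).mono hSN)

lemma sqrt_div_sub_one_sq_mul_one_sub_inv {x : ℝ} (hx : 1 < x) :
    Real.sqrt (x / (x - 1)) ^ 2 * (1 - x⁻¹) = 1 := by
  have hx1 : 0 < x - 1 := by linarith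
  rw [Real.sq_sqrt (div_nonneg (by linarith) hx1.le)]
  field_simp

lemma natDiv_mul_ceil_mul_pow_lt_one {α q : ℝ} (hα : 1 ≤ α) (hq : 1 / 2 ≤ q) (hαq : α ^ 2 * q = 1)
    {n : ℕ} (hn : 9 ≤ n) :
    (((⌈α ^ (n + 1)⌉₊ - 1) / n : ℕ) : ℝ) * ⌈α ^ (n + 1)⌉₊ * q ^ n < 1 := by
  set N := ⌈α ^ (n + 1)⌉₊
  have hN : (N : ℝ) ^ 2 * q ^ (n + 1) ≤ 4 := by
    have h1 : (N : ℝ) < 2 * α ^ (n + 1) :=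
      Nat.ceil_lt_two_mul (by linarith [one_le_pow₀ (n := n + 1) hα])
    calc (N : ℝ) ^ 2 * q ^ (n + 1) ≤ (2 * α ^ (n + 1)) ^ 2 * q ^ (n + 1) := by
          gcongr
      _ = 4 * (α ^ 2 * q) ^ (n + 1) := by ring
      _ = 4 := by rw [hαq, one_pow, mul_one]
  have hD : (((N - 1) / n : ℕ) : ℝ) ≤ N / n :=
    (Nat.cast_div_le).trans (by gcongr; exact_mod_cast Nat.sub_le N 1)
  have hn' : (9 : ℝ) ≤ n := by exact_mod_cast hn
  calc (((N - 1) / n : ℕ) : ℝ) * N * q ^ n ≤ N / n * N * q ^ n := by gcongr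
    _ = (N : ℝ) ^ 2 * q ^ (n + 1) / (n * q) := by field_simp; ring
    _ ≤ 4 / (n * q) := by gcongr
    _ < 1 := by rw [div_lt_one (by positivity)]; nlinarith

/-- For every `m ≥ 1` and all sufficiently large `k`, `S_m(k) > α^k` where
`α = √(2^m/(2^m - 1))`; that is, there is a 2-coloring of `{1, ..., ⌈α^k⌉}` with no
monochromatic `k`-term semi-progression of scope `m`. -/
theorem S_exponential_lower_bound (m : ℕ) (hm : 1 ≤ m) :
    ∃ K : ℕ, ∀ k, K ≤ k →
      (Real.sqrt ((2 : ℝ) ^ m / ((2 : ℝ) ^ m - 1))) ^ k < (S m k : ℝ) ∧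
      ∃ A ∈ (Finset.Icc 1
          ⌈(Real.sqrt ((2 : ℝ) ^ m / ((2 : ℝ) ^ m - 1))) ^ k⌉₊).powerset,
        ¬ HasMonoSP ⌈(Real.sqrt ((2 : ℝ) ^ m / ((2 : ℝ) ^ m - 1))) ^ k⌉₊ k m A := by
  refine ⟨10, fun k hk => ?_⟩
  obtain ⟨n, rfl⟩ : ∃ n, k = n + 1 := ⟨k - 1, by omega⟩
  set α := Real.sqrt ((2 : ℝ) ^ m / ((2 : ℝ) ^ m - 1))
  set N := ⌈α ^ (n + 1)⌉₊
  have h2m : (2 : ℝ) ≤ 2 ^ m := by simpa using pow_le_pow_right₀ one_le_two hm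
  have hα : 1 ≤ α := Real.one_le_sqrt.2 ((one_le_div (by linarith)).2 (by linarith))
  have hq : (1 / 2 : ℝ) ≤ 1 - (2 ^ m)⁻¹ := by
    linarith [inv_anti₀ two_pos h2m]
  have hlt := natDiv_mul_ceil_mul_pow_lt_one hα hq
    (sqrt_div_sub_one_sq_mul_one_sub_inv (by linarith)) (show 9 ≤ n by omega)
  rw [← inv_pow, ← one_div] at hlt
  have hf : f N (n + 1) m < 2 ^ N := by
    have := (f_succ_le (N := N) (m := m) (show 0 < n by omega)).trans_lt
      (mul_lt_of_lt_one_left (by positivity) hlt)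
    exact_mod_cast this
  obtain ⟨A, hA, hbad⟩ := exists_not_hasMonoSP_of_f_lt hf
  exact ⟨(Nat.le_ceil _).trans_lt (by exact_mod_cast lt_S_of_not_hasMonoSP hm hbad), A, hA, hbad⟩
end

section
/- Let the conjugate vector of a k-term quasi-progression Q of diameter 1 and low-difference d be (u_1,...,u_{k-1}) ∈ {0,1}^{k-1} with u_i = a_{i+1} - a_i - d. Define w(Q) as u_{k-1} plus the number of indices j with u_j = 1 and u_{j+1} = 0. Then the weighted sums S_{t,0} and S_{t,1} over binary conjugate vectors of length t beginning with 0 and 1 respectively (weighting a vector u by 2^{-w(u)}) satisfy the recursion (S_{t,0}, S_{t,1})^T = A (S_{t-1,0}, S_{t-1,1})^T with A = [[1,1],[1/2,1]] and initial values S_{1,0} = 1, S_{1,1} = 1/2. -/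
open scoped Classical

def wt {t : ℕ} (u : Fin (t + 1) → Bool) : ℕ :=
  (if u (Fin.last t) then 1 else 0) +
    (Finset.univ.filter
      (fun j : Fin t => u j.castSucc = true ∧ u j.succ = false)).card

noncomputable def Swt (t : ℕ) (b : Bool) : ℝ :=
  ∑ u ∈ Finset.univ.filter (fun u : Fin (t + 1) → Bool => u 0 = b),
    ((2 : ℝ)⁻¹) ^ wt u

lemma wt_cons (t : ℕ) (b : Bool) (v : Fin (t + 1) → Bool) :
    wt (Fin.cons b v : Fin (t + 2) → Bool) =
      wt v + (if b = true ∧ v 0 = false then 1 else 0) := by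
  unfold wt
  rw [Finset.card_filter, Finset.card_filter, Fin.sum_univ_succ]
  have h1 : (Fin.cons b v : Fin (t+2) → Bool) (Fin.last (t+1)) = v (Fin.last t) := by
    rw [← Fin.succ_last, Fin.cons_succ]
  have h2 : ∀ i : Fin t,
      (Fin.cons b v : Fin (t+2) → Bool) (Fin.castSucc i.succ) = v i.castSucc := by
    intro i
    rw [← Fin.succ_castSucc, Fin.cons_succ]
  simp [h1, h2, Fin.cons_succ]
  ring_nf

lemma sum_cons (t : ℕ) (b : Bool) (f : (Fin (t + 2) → Bool) → ℝ) :
    ∑ u ∈ Finset.univ.filter (fun u : Fin (t + 2) → Bool => u 0 = b), f u =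
      ∑ v : Fin (t + 1) → Bool, f (Fin.cons b v) := by
  refine Finset.sum_nbij' (fun u => Fin.tail u) (fun v => Fin.cons b v) ?_ ?_ ?_ ?_ ?_
  · intro u hu; exact Finset.mem_univ _
  · intro v hv; simp [Fin.cons_zero]
  · intro u hu
    simp only [Finset.mem_filter] at hu
    simp only [← hu.2]; rw [Fin.cons_self_tail]
  · intro v hv; simp [Fin.tail_cons]
  · intro u hu
    simp only [Finset.mem_filter] at hu
    simp only [← hu.2]; rw [Fin.cons_self_tail]

lemma Swt_succ (t : ℕ) (b : Bool) :
    Swt (t + 1) b = (if b then (2:ℝ)⁻¹ else 1) * Swt t false + Swt t true := by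
  rw [Swt, sum_cons]
  have key : ∀ v : Fin (t + 1) → Bool,
      ((2:ℝ)⁻¹) ^ wt (Fin.cons b v : Fin (t+2) → Bool) =
        ((2:ℝ)⁻¹) ^ wt v * (if b = true ∧ v 0 = false then (2:ℝ)⁻¹ else 1) := by
    intro v
    rw [wt_cons]
    split_ifs <;> simp [pow_add]
  simp_rw [key]
  rw [← Finset.sum_filter_add_sum_filter_not Finset.univ (fun v : Fin (t+1) → Bool => v 0 = false)]
  have e1 : ∑ v ∈ Finset.univ.filter (fun v : Fin (t+1) → Bool => v 0 = false),
      ((2:ℝ)⁻¹) ^ wt v * (if b = true ∧ v 0 = false then (2:ℝ)⁻¹ else 1) =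
      (if b then (2:ℝ)⁻¹ else 1) * Swt t false := by
    rw [Swt, Finset.mul_sum]
    apply Finset.sum_congr rfl
    intro v hv
    simp only [Finset.mem_filter] at hv
    cases b <;> simp [hv.2] <;> ring
  have e2 : ∑ v ∈ Finset.univ.filter (fun v : Fin (t+1) → Bool => ¬ v 0 = false),
      ((2:ℝ)⁻¹) ^ wt v * (if b = true ∧ v 0 = false then (2:ℝ)⁻¹ else 1) =
      Swt t true := by
    rw [Swt]
    apply Finset.sum_congr (by ext v; simp)
    intro v hv
    simp only [Finset.mem_filter] at hv
    simp [hv.2]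
  rw [e1, e2]

/-- The weighted sums satisfy `S_{1,0} = 1`, `S_{1,1} = 1/2` and the transfer-matrix
recursion `(S_{t,0}, S_{t,1})ᵀ = A (S_{t-1,0}, S_{t-1,1})ᵀ` with `A = [[1,1],[1/2,1]]`. -/
theorem quasiprog_weighted_sum_recursion :
    Swt 0 false = 1 ∧ Swt 0 true = 1 / 2 ∧
    ∀ t : ℕ,
      ![Swt (t + 1) false, Swt (t + 1) true] =
        (!![(1 : ℝ), 1; 1 / 2, 1]).mulVec ![Swt t false, Swt t true] := by
  have h0 : ∀ b : Bool, Swt 0 b = ∑ v : Fin 0 → Bool, ((2:ℝ)⁻¹) ^ wt (Fin.cons b v : Fin 1 → Bool) := by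
    intro b
    rw [Swt]
    refine Finset.sum_nbij' (fun u => Fin.tail u) (fun v => Fin.cons b v) ?_ ?_ ?_ ?_ ?_
    · intro u hu; exact Finset.mem_univ _
    · intro v hv; simp [Fin.cons_zero]
    · intro u hu
      simp only [Finset.mem_filter] at hu
      simp only [← hu.2]; rw [Fin.cons_self_tail]
    · intro v hv; simp [Fin.tail_cons]
    · intro u hu
      simp only [Finset.mem_filter] at hu
      simp only [← hu.2]; rw [Fin.cons_self_tail]
  have hb : ∀ b : Bool, Swt 0 b = ((2:ℝ)⁻¹) ^ wt (Fin.cons b (Fin.elim0) : Fin 1 → Bool) := by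
    intro b
    rw [h0]
    rw [Finset.sum_eq_single_of_mem (Fin.elim0) (Finset.mem_univ _)]
    intro v _ hv
    exact absurd (funext fun i => i.elim0) hv
  constructor
  · rw [hb]; simp [wt]
  constructor
  · rw [hb]; simp [wt]
  · intro t
    funext i
    fin_cases i <;>
      simp [Matrix.mulVec, dotProduct, Swt_succ] <;> ring
end

section
/- Let P be a monochromatic (under a 2-coloring χ) k-term semi-progression of scope m with first term a, low-difference d, and conjugate vector (u_1,...,u_{k-1}). If P is such that no monochromatic semi-progression with the same first term and low-difference has a lexicographically smaller conjugate vector, then for each index i and each 0 ≤ s < u_i, the integer a_i + (s+1)d has the color opposite to that of P. In particular, w(P) = u_1 + ... + u_{k-1} elements of {a, a+d, ..., a + m(k-1)d} receive the opposite color. -/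
/-- If `P = (aseq 0, ..., aseq (k-1))` is a monochromatic `k`-term semi-progression of
scope `m` with first term `a`, low-difference `d` and conjugate vector `u`, and no
monochromatic semi-progression with the same first term and low-difference has a
lexicographically smaller conjugate vector, then for each `i` and each `s < u i` the
integer `aseq i + (s+1)d` has the color opposite to that of `P`.  In particular,
`w(P) = u 0 + ⋯ + u (k-2)` elements of `{a, a+d, ..., a + m(k-1)d}` receive the
opposite color. -/
theorem primary_semiprog_forced_colors (m k d a : ℕ) (hm : 1 ≤ m) (hd : 1 ≤ d)
    (aseq u : ℕ → ℕ) (χ : ℕ → Fin 2)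
    (ha : aseq 0 = a)
    (hu : ∀ i, i + 1 < k → u i < m ∧ aseq (i + 1) = aseq i + (u i + 1) * d)
    (hmono : ∀ j < k, χ (aseq j) = χ a)
    (hmin : ∀ b u' : ℕ → ℕ, b 0 = a →
      (∀ i, i + 1 < k → u' i < m ∧ b (i + 1) = b i + (u' i + 1) * d) →
      (∀ j < k, χ (b j) = χ a) →
      ¬ ∃ i, i + 1 < k ∧ (∀ j < i, u' j = u j) ∧ u' i < u i) :
    (∀ i, i + 1 < k → ∀ s < u i, χ (aseq i + (s + 1) * d) ≠ χ a) ∧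
    Set.ncard {x : ℕ | ∃ i, i + 1 < k ∧ ∃ s < u i, x = aseq i + (s + 1) * d} =
      ∑ i ∈ Finset.range (k - 1), u i ∧
    {x : ℕ | ∃ i, i + 1 < k ∧ ∃ s < u i, x = aseq i + (s + 1) * d} ⊆
      {x : ℕ | a ≤ x ∧ x ≤ a + m * (k - 1) * d ∧ χ x ≠ χ a} := by
  classical
  have haseq_ub : ∀ j, j < k → aseq j ≤ a + j * (m * d) := by
    intro j
    induction j with
    | zero => intro _; simp [ha]
    | succ n ih =>
      intro hjk
      have h1 := hu n (by omega)
      have h2 := ih (by omega)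
      have h3 : (u n + 1) * d ≤ m * d := Nat.mul_le_mul_right d (by omega)
      rw [h1.2]
      nlinarith
  have haseq_mono : ∀ i j, i ≤ j → j < k → aseq i ≤ aseq j := by
    intro i j hij hjk
    induction j with
    | zero =>
      have : i = 0 := by omega
      simp [this]
    | succ n ih =>
      rcases Nat.lt_or_ge i (n+1) with h | h
      · have h1 := hu n (by omega)
        have := ih (by omega) (by omega)
        omega
      · have : i = n + 1 := by omega
        simp [this]
  have part1 : ∀ i, i + 1 < k → ∀ s < u i, χ (aseq i + (s + 1) * d) ≠ χ a := by
    intro i hik s hs hcol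
    set b : ℕ → ℕ := fun j => if j ≤ i then aseq j else if j = i+1 then aseq i + (s+1)*d else aseq (j-1) with hb
    set u' : ℕ → ℕ := fun j => if j < i then u j else if j = i then s else if j = i+1 then u i - s - 1 else u (j-1) with hu'
    refine hmin b u' (by simp [hb]; exact ha) ?_ ?_ ⟨i, hik, ?_, ?_⟩
    · intro j hjk
      rcases lt_trichotomy j i with h | rfl | h
      · obtain ⟨h1a, h1b⟩ := hu j (by omega)
        simp only [hb, hu', Nat.add_sub_cancel]
        constructor
        · split_ifs <;> omega
        · split_ifs <;> omega
      · obtain ⟨h1a, h1b⟩ := hu j hik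
        simp only [hb, hu', Nat.add_sub_cancel]
        constructor
        · split_ifs <;> omega
        · split_ifs <;> omega
      · rcases Nat.eq_or_lt_of_le (by omega : i + 1 ≤ j) with rfl | h2
        · obtain ⟨h1a, h1b⟩ := hu i (by omega)
          have hsum : (s + 1) * d + (u i - s - 1 + 1) * d = (u i + 1) * d := by
            rw [← Nat.add_mul]; congr 1; omega
          simp only [hb, hu', Nat.add_sub_cancel]
          constructor
          · split_ifs <;> omega
          · split_ifs <;> omega
        · obtain ⟨h1a, h1b⟩ := hu (j-1) (by omega)
          have h1b' : aseq j = aseq (j-1) + (u (j-1) + 1) * d := by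
            rw [← h1b]; congr 1; omega
          simp only [hb, hu', Nat.add_sub_cancel]
          constructor
          · split_ifs <;> omega
          · split_ifs <;> omega
    · intro j hjk
      simp only [hb]
      split_ifs with h1 h2
      · exact hmono j hjk
      · exact hcol
      · exact hmono (j-1) (by omega)
    · intro j hj
      simp only [hu']
      split_ifs <;> omega
    · simp only [hu']
      split_ifs <;> omega
  refine ⟨part1, ?_, ?_⟩
  · have hSeq : {x : ℕ | ∃ i, i + 1 < k ∧ ∃ s < u i, x = aseq i + (s + 1) * d} =
        ↑(((Finset.range (k-1)).sigma (fun i => Finset.range (u i))).image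
          (fun p => aseq p.1 + (p.2 + 1) * d)) := by
      ext x
      simp only [Set.mem_setOf_eq, Finset.coe_image, Set.mem_image, Finset.mem_coe,
        Finset.mem_sigma, Finset.mem_range]
      constructor
      · rintro ⟨i, hi, s, hs, rfl⟩
        exact ⟨⟨i, s⟩, ⟨show i < k - 1 by omega, hs⟩, rfl⟩
      · rintro ⟨⟨i, s⟩, ⟨hi, hs⟩, rfl⟩
        dsimp only at hi hs
        exact ⟨i, by omega, s, hs, rfl⟩
    rw [hSeq, Set.ncard_coe_finset]
    have hkey : ∀ (i s i' s' : ℕ), i < i' → i' < k - 1 → s < u i →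
        aseq i + (s + 1) * d < aseq i' + (s' + 1) * d := by
      intro i s i' s' hii hik hs
      have h1 := hu i (by omega)
      have h2 : aseq (i+1) ≤ aseq i' := haseq_mono (i+1) i' (by omega) (by omega)
      have h3 : (s + 1) * d < (u i + 1) * d :=
        (Nat.mul_lt_mul_right (by omega : 0 < d)).mpr (by omega)
      have h4 : 1 * d ≤ (s' + 1) * d := Nat.mul_le_mul_right d (by omega)
      omega
    rw [Finset.card_image_of_injOn, Finset.card_sigma]
    · simp
    · rintro ⟨i, s⟩ hp ⟨i', s'⟩ hq heq
      simp only [Finset.coe_sigma, Finset.mem_coe, Finset.mem_sigma, Finset.mem_range,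
        Set.mem_sigma_iff] at hp hq
      dsimp only at hp hq heq
      obtain ⟨hp1, hp2⟩ := hp
      obtain ⟨hq1, hq2⟩ := hq
      rcases lt_trichotomy i i' with h | rfl | h
      · exact absurd heq (Nat.ne_of_lt (hkey i s i' s' h hq1 hp2))
      · have hss : s = s' := by
          have hd' : (s + 1) * d = (s' + 1) * d := by omega
          have := Nat.eq_of_mul_eq_mul_right (by omega : 0 < d) hd'
          omega
        simp [hss]
      · exact absurd heq.symm (Nat.ne_of_lt (hkey i' s' i s h hp1 hq2))
  · rintro x ⟨i, hik, s, hs, rfl⟩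
    obtain ⟨h1a, h1b⟩ := hu i hik
    have h2 := haseq_ub (i+1) hik
    have h3 : aseq 0 ≤ aseq i := haseq_mono 0 i (by omega) (by omega)
    have h4 : (s + 1) * d < (u i + 1) * d :=
      (Nat.mul_lt_mul_right (by omega : 0 < d)).mpr (by omega)
    refine ⟨by omega, ?_, part1 i hik s hs⟩
    have h5 : (i + 1) * (m * d) ≤ (k - 1) * (m * d) := Nat.mul_le_mul_right _ (by omega)
    have h6 : m * (k - 1) * d = (k - 1) * (m * d) := by ring
    omega
end

section
/- For a fixed pair (a,d) and fixed coloring color class, the number of 2-colorings of {1,...,N} whose (a,d)-primary k-term semi-progression of scope m is a given progression P equals at most 2^{N - k - w(P)}, where w(P) is the weight of P. -/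
/-!
The `j`-th term of `P` is `a + (j + u 0 + ⋯ + u (j - 1)) d`, so `P` lies in the arithmetic progression
`a, a + d, …, a + (k - 1 + w(P)) d` of `k + w(P)` terms. If `P` is the primary semi-progression
of a coloring, every other point of that progression has the opposite color: inserting it into `P`
splits a gap `u i` into `v` and `u i - v - 1` and gives a monochromatic semi-progression with a
lexicographically smaller conjugate vector. So the coloring is determined on `k + w(P)` points.
-/

open scoped Classical

open Finset

theorem Finset.card_le_two_pow_sub_of_inter_eq {α : Type*} [DecidableEq α]
    {𝒜 : Finset (Finset α)} {S T F : Finset α} (hST : S ⊆ T)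
    (h : ∀ A ∈ 𝒜, A ⊆ T ∧ A ∩ S = F) : #𝒜 ≤ 2 ^ (#T - #S) :=
  calc #𝒜 ≤ #((T \ S).powerset.image (· ∪ F)) := card_le_card fun A hA => by
        obtain ⟨hAT, hAS⟩ := h A hA
        refine mem_image.2 ⟨A \ S, mem_powerset.2 (sdiff_subset_sdiff hAT le_rfl), ?_⟩
        rw [← hAS, sdiff_union_inter]
    _ ≤ #(T \ S).powerset := card_image_le
    _ = 2 ^ (#T - #S) := by rw [card_powerset, card_sdiff_of_subset hST]

namespace SemiProgression

def offset (u : ℕ → ℕ) (j : ℕ) : ℕ := j + ∑ l ∈ range j, u l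

@[simp] theorem offset_zero (u : ℕ → ℕ) : offset u 0 = 0 := rfl

theorem offset_succ (u : ℕ → ℕ) (j : ℕ) : offset u (j + 1) = offset u j + u j + 1 := by
  simp only [offset, sum_range_succ]; ring

theorem strictMono_offset (u : ℕ → ℕ) : StrictMono (offset u) :=
  strictMono_nat_of_lt_succ fun j => by rw [offset_succ]; omega

theorem eq_add_offset_mul {a d k : ℕ} {b u : ℕ → ℕ} (hb0 : b 0 = a)
    (hb : ∀ i, i + 1 < k → b (i + 1) = b i + (u i + 1) * d) :
    ∀ j < k, b j = a + offset u j * d := by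
  intro j hj
  induction j with
  | zero => simp [hb0]
  | succ j ih => rw [hb j hj, ih (by omega), offset_succ]; ring

theorem eq_offset_or_eq_gap_of_le_offset (u : ℕ → ℕ) {t : ℕ} :
    ∀ {n}, t ≤ offset u n →
      (∃ j ≤ n, offset u j = t) ∨ ∃ i < n, ∃ v < u i, offset u i + v + 1 = t
  | 0, ht => .inl ⟨0, le_rfl, (Nat.le_zero.1 ht).symm⟩
  | n + 1, ht => by
    rw [offset_succ] at ht
    by_cases htn : t ≤ offset u n
    · rcases eq_offset_or_eq_gap_of_le_offset u htn with ⟨j, hj, rfl⟩ | ⟨i, hi, v, hv, rfl⟩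
      · exact .inl ⟨j, by omega, rfl⟩
      · exact .inr ⟨i, by omega, v, hv, rfl⟩
    · by_cases hv : t - offset u n - 1 < u n
      · exact .inr ⟨n, by omega, _, hv, by omega⟩
      · exact .inl ⟨n + 1, le_rfl, by rw [offset_succ]; omega⟩

def splitGap (u : ℕ → ℕ) (i v : ℕ) (j : ℕ) : ℕ :=
  if j < i then u j else if j = i then v else if j = i + 1 then u i - v - 1 else u (j - 1)

theorem offset_splitGap {u : ℕ → ℕ} {i v : ℕ} (hv : v < u i) (j : ℕ) :
    offset (splitGap u i v) j =
      if j ≤ i then offset u j else if j = i + 1 then offset u i + v + 1 else offset u (j - 1) := by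
  induction j with
  | zero => simp
  | succ j ih =>
    rw [offset_succ, ih]
    cases j <;> grind [splitGap, offset_succ]

theorem lt_add_sum_iff_le_offset {u : ℕ → ℕ} {k t : ℕ} :
    t < k + ∑ i ∈ range (k - 1), u i ↔ 0 < k ∧ t ≤ offset u (k - 1) := by
  rcases k with _ | k
  · simp
  · simp only [add_tsub_cancel_right, offset]; omega

def IsLexMinimal (A : Finset ℕ) (m k d a : ℕ) (u : ℕ → ℕ) : Prop :=
  ∀ b u' : ℕ → ℕ, b 0 = a →
    (∀ i, i + 1 < k → u' i < m ∧ b (i + 1) = b i + (u' i + 1) * d) →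
    ((∀ j < k, b j ∈ A) ∨ (∀ j < k, b j ∉ A)) →
    ¬ ∃ i, i + 1 < k ∧ (∀ j < i, u' j = u j) ∧ u' i < u i

theorem add_gap_mul_not_mem {A : Finset ℕ} {m k d a i v : ℕ} {u : ℕ → ℕ}
    (hum : ∀ i, i + 1 < k → u i < m) (hP : ∀ j < k, a + offset u j * d ∈ A)
    (hprim : IsLexMinimal A m k d a u)
    (hi : i + 1 < k) (hv : v < u i) :
    a + (offset u i + v + 1) * d ∉ A := by
  intro hx
  set u' := splitGap u i v
  refine hprim (fun j => a + offset u' j * d) u' (by simp) (fun j hj => ⟨?_, ?_⟩)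
    (.inl fun j hj => ?_) ⟨i, hi, fun j hj => by simp [u', splitGap, hj], by simp [u', splitGap, hv]⟩
  · have := hum i hi
    simp only [u', splitGap]
    split_ifs
    · exact hum j hj
    · omega
    · omega
    · exact hum (j - 1) (by omega)
  · simp only [offset_succ]; ring
  · simp only [u', offset_splitGap hv]
    split_ifs
    · exact hP j (by omega)
    · exact hx
    · exact hP (j - 1) (by omega)

theorem inter_image_range_eq {A : Finset ℕ} {m k d a : ℕ} {u : ℕ → ℕ}
    (hum : ∀ i, i + 1 < k → u i < m) (hP : ∀ j < k, a + offset u j * d ∈ A)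
    (hprim : IsLexMinimal A m k d a u) :
    A ∩ (range (k + ∑ i ∈ range (k - 1), u i)).image (fun t => a + t * d) =
      (range k).image (fun j => a + offset u j * d) := by
  ext x
  simp only [mem_inter, mem_image, mem_range, lt_add_sum_iff_le_offset]
  constructor
  · rintro ⟨hxA, t, ⟨hk, ht⟩, rfl⟩
    rcases eq_offset_or_eq_gap_of_le_offset u ht with ⟨j, hj, rfl⟩ | ⟨i, hi, v, hv, rfl⟩
    · exact ⟨j, by omega, rfl⟩
    · exact absurd hxA (add_gap_mul_not_mem hum hP hprim (by omega) hv)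
  · rintro ⟨j, hj, rfl⟩
    exact ⟨hP j hj, offset u j, ⟨by omega, (strictMono_offset u).monotone (by omega)⟩, rfl⟩

end SemiProgression

open SemiProgression

theorem count_colorings_with_primary_semiprog_general (N m k d a : ℕ)
    (hd : 1 ≤ d) (aseq u : ℕ → ℕ)
    (ha : aseq 0 = a)
    (hrange : ∀ j < k, aseq j ∈ Finset.Icc 1 N)
    (hu : ∀ i, i + 1 < k → u i < m ∧ aseq (i + 1) = aseq i + (u i + 1) * d) :
    ((Finset.Icc 1 N).powerset.filter (fun A : Finset ℕ =>
        (∀ j < k, aseq j ∈ A) ∧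
        ∀ b u' : ℕ → ℕ, b 0 = a →
          (∀ i, i + 1 < k → u' i < m ∧ b (i + 1) = b i + (u' i + 1) * d) →
          ((∀ j < k, b j ∈ A) ∨ (∀ j < k, b j ∉ A)) →
          ¬ ∃ i, i + 1 < k ∧ (∀ j < i, u' j = u j) ∧ u' i < u i)).card ≤
      2 ^ (N - k - ∑ i ∈ Finset.range (k - 1), u i) := by
  have haseq := eq_add_offset_mul ha fun i hi => (hu i hi).2
  set S := (range (k + ∑ i ∈ range (k - 1), u i)).image (fun t => a + t * d)
  have hS : #S = k + ∑ i ∈ range (k - 1), u i := by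
    rw [card_image_of_injective _ fun s t hst => by simpa [Nat.pos_iff_ne_zero.1 hd] using hst,
      card_range]
  have hSI : S ⊆ Icc 1 N := by
    simp only [S, subset_iff, mem_image, mem_range, lt_add_sum_iff_le_offset]
    rintro _ ⟨t, ⟨hk, ht⟩, rfl⟩
    have h0 := haseq 0 hk ▸ hrange 0 hk
    have hlast := haseq (k - 1) (by omega) ▸ hrange (k - 1) (by omega)
    simp only [mem_Icc, offset_zero, zero_mul, add_zero] at h0 hlast ⊢
    exact ⟨by omega, by nlinarith⟩
  calc _ ≤ 2 ^ (#(Icc 1 N) - #S) := card_le_two_pow_sub_of_inter_eq hSI fun A hA => by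
        obtain ⟨hAI, hmem, hprim⟩ := by simpa only [mem_filter, mem_powerset] using hA
        exact ⟨hAI, inter_image_range_eq (fun i hi => (hu i hi).1)
          (fun j hj => haseq j hj ▸ hmem j hj) hprim⟩
    _ = _ := by rw [hS, Nat.card_Icc, Nat.add_sub_cancel, Nat.sub_sub]

/-- For a fixed pair `(a,d)` and a fixed color class, the number of 2-colorings of
`{1,...,N}` (encoded by the set `A` of elements of the fixed color) whose
`(a,d)`-primary `k`-term semi-progression of scope `m` is a given progression
`P = (aseq 0, ..., aseq (k-1))` is at most `2^{N - k - w(P)}`, where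
`w(P) = u 0 + ⋯ + u (k-2)` is the weight of `P`. -/
theorem count_colorings_with_primary_semiprog (N m k d a : ℕ) (hm : 1 ≤ m)
    (hd : 1 ≤ d) (hk : 1 ≤ k) (aseq u : ℕ → ℕ)
    (ha : aseq 0 = a)
    (hrange : ∀ j < k, aseq j ∈ Finset.Icc 1 N)
    (hu : ∀ i, i + 1 < k → u i < m ∧ aseq (i + 1) = aseq i + (u i + 1) * d) :
    ((Finset.Icc 1 N).powerset.filter (fun A : Finset ℕ =>
        (∀ j < k, aseq j ∈ A) ∧
        ∀ b u' : ℕ → ℕ, b 0 = a →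
          (∀ i, i + 1 < k → u' i < m ∧ b (i + 1) = b i + (u' i + 1) * d) →
          ((∀ j < k, b j ∈ A) ∨ (∀ j < k, b j ∉ A)) →
          ¬ ∃ i, i + 1 < k ∧ (∀ j < i, u' j = u j) ∧ u' i < u i)).card ≤
      2 ^ (N - k - ∑ i ∈ Finset.range (k - 1), u i) :=
  count_colorings_with_primary_semiprog_general N m k d a hd aseq u ha hrange hu
end
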